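/- Let u, v ∈ ℤ² be linearly independent, S = {0, u, v}, and -S = {0, -u, -v}. Then π({S, -S}) = 1/3. -/

import Mathlib

/-- A shooting pattern `X` hits a ship `S` in `ℤ²` if every translate of `S` intersects `X`. -/
def Hits2 (X S : Set (ℤ × ℤ)) : Prop := ∀ n : ℤ × ℤ, ∃ s ∈ S, n + s ∈ X

/-- Lower asymptotic density of a set in `ℤ²`. -/
noncomputable def lowerDensity2 (X : Set (ℤ × ℤ)) : ℝ :=
  Filter.liminf (fun N : ℕ =>
    ((X ∩ Set.Icc (-(N:ℤ), -(N:ℤ)) ((N:ℤ), (N:ℤ))).ncard : ℝ) / (2 * N + 1) ^ 2)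
    Filter.atTop

/-- Optimal piercing density of a family of ships in `ℤ²`. -/
noncomputable def piercing2 (F : Set (Set (ℤ × ℤ))) : ℝ :=
  sInf (lowerDensity2 '' {X | ∀ S ∈ F, Hits2 X S})

/-!
Lower bound: if `X` hits a ship `S`, every point of a box lies in one of the `|S|` translates
`X - s`, and each translate has at most as many points in the box as `X` has in a slightly larger
box, so `X` has density at least `1 / |S|`.

Upper bound: with `D = det (u, v) ≠ 0`, the integer quotient
`(p.1 (u.2 + v.2) - p.2 (u.1 + v.1)) / D` grows by `1` along `u` and drops by `1` along `v`.
Reduced mod `3` it colours `ℤ²` so that every translate of `{0, u, v}` and of `{0, -u, -v}` sees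
all three colours, and the colour-`0` class, whose translates by `0`, `u`, `2u` are disjoint, has
density at most `1 / 3`.
-/

open Finset Filter Topology

namespace Battleship

noncomputable def box (N : ℕ) : Finset (ℤ × ℤ) := Icc (-(N : ℤ)) N ×ˢ Icc (-(N : ℤ)) N

lemma mem_box {N : ℕ} {p : ℤ × ℤ} : p ∈ box N ↔ p.1.natAbs ≤ N ∧ p.2.natAbs ≤ N := by
  simp only [box, mem_product, mem_Icc]
  omega

lemma card_box (N : ℕ) : #(box N) = (2 * N + 1) ^ 2 := by
  rw [box, card_product, Int.card_Icc, sq]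
  congr 1 <;> omega

lemma add_mem_box {N R : ℕ} {p s : ℤ × ℤ} (hp : p ∈ box N) (hs : s ∈ box R) :
    p + s ∈ box (N + R) := by
  rw [mem_box] at *
  simp only [Prod.fst_add, Prod.snd_add]
  omega

lemma exists_subset_box (S : Finset (ℤ × ℤ)) : ∃ R, S ⊆ box R :=
  ⟨S.sup fun s => max s.1.natAbs s.2.natAbs, fun s hs => mem_box.2 <| by
    have := le_sup (f := fun s : ℤ × ℤ => max s.1.natAbs s.2.natAbs) hs
    omega⟩

open scoped Classical in
noncomputable def count (X : Set (ℤ × ℤ)) (N : ℕ) : ℕ := #{p ∈ box N | p ∈ X}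

lemma lowerDensity2_eq_liminf (X : Set (ℤ × ℤ)) :
    lowerDensity2 X = liminf (fun N : ℕ => (count X N : ℝ) / (2 * N + 1) ^ 2) atTop := by
  classical
  have h (N : ℕ) : X ∩ Set.Icc (-(N : ℤ), -(N : ℤ)) (N, N) = ↑{p ∈ box N | p ∈ X} := by
    ext p
    simp only [coe_filter, box, mem_product, mem_Icc, Set.mem_inter_iff, Set.mem_Icc, Prod.le_def,
      Set.mem_ofPred_eq]
    tauto
  simp only [lowerDensity2, count, h, Set.ncard_coe_finset]

lemma count_le_card_box (X : Set (ℤ × ℤ)) (N : ℕ) : count X N ≤ (2 * N + 1) ^ 2 := by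
  classical
  exact card_box N ▸ card_filter_le _ _

lemma count_preimage_add_le {X : Set (ℤ × ℤ)} {s : ℤ × ℤ} {R : ℕ} (hs : s ∈ box R) (N : ℕ) :
    count ((· + s) ⁻¹' X) N ≤ count X (N + R) :=
  card_le_card_of_injOn (· + s)
    (fun p hp => by
      simp only [coe_filter, Set.mem_ofPred_eq] at hp ⊢
      exact ⟨add_mem_box hp.1 hs, hp.2⟩)
    (add_left_injective s).injOn

lemma count_le_count_preimage_add {X : Set (ℤ × ℤ)} {s : ℤ × ℤ} {R : ℕ} (hs : s ∈ box R)
    (N : ℕ) : count X N ≤ count ((· + s) ⁻¹' X) (N + R) := by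
  have hs' : -s ∈ box R := by rw [mem_box] at *; simpa using hs
  simpa [Set.preimage_preimage] using count_preimage_add_le (X := (· + s) ⁻¹' X) hs' N

lemma sq_le_card_mul_count_of_hits {X : Set (ℤ × ℤ)} {S : Finset (ℤ × ℤ)} (hX : Hits2 X S)
    {R : ℕ} (hS : S ⊆ box R) (N : ℕ) : (2 * N + 1) ^ 2 ≤ #S * count X (N + R) := by
  classical
  calc (2 * N + 1) ^ 2 = #(box N) := (card_box N).symm
    _ ≤ #(S.biUnion fun s => {p ∈ box N | p ∈ (· + s) ⁻¹' X}) := card_le_card fun p hp => by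
        obtain ⟨s, hs, hps⟩ := hX p
        exact mem_biUnion.2 ⟨s, hs, mem_filter.2 ⟨hp, hps⟩⟩
    _ ≤ ∑ s ∈ S, count ((· + s) ⁻¹' X) N := card_biUnion_le
    _ ≤ ∑ _s ∈ S, count X (N + R) := sum_le_sum fun s hs => count_preimage_add_le (hS hs) N
    _ = #S * count X (N + R) := by rw [sum_const, smul_eq_mul]

lemma apply_add_nsmul_of_apply_add {R : Type*} [AddMonoidWithOne R] {ψ : ℤ × ℤ → R} {u : ℤ × ℤ}
    (hψ : ∀ p, ψ (p + u) = ψ p + 1) (p : ℤ × ℤ) (j : ℕ) : ψ (p + j • u) = ψ p + j := by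
  induction j with
  | zero => simp
  | succ j ih => rw [succ_nsmul, ← add_assoc, hψ, ih, Nat.cast_succ, add_assoc]

lemma card_mul_count_le {k : ℕ} {ψ : ℤ × ℤ → ZMod k} {u : ℤ × ℤ}
    (hψ : ∀ p, ψ (p + u) = ψ p + 1) {R : ℕ} (hu : ∀ j < k, j • u ∈ box R) (N : ℕ) :
    k * count {p | ψ p = 0} N ≤ (2 * (N + R) + 1) ^ 2 := by
  classical
  set X := {p | ψ p = 0}
  have hdisj : (range k : Set ℕ).PairwiseDisjoint
      fun j => {p ∈ box (N + R) | p ∈ (· + j • u) ⁻¹' X} := by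
    intro i hi j hj hij
    refine disjoint_left.2 fun p hpi hpj => hij ?_
    simp only [mem_filter, Set.mem_preimage, X, Set.mem_ofPred_eq,
      apply_add_nsmul_of_apply_add hψ] at hpi hpj
    have := (ZMod.natCast_eq_natCast_iff' i j k).1 (add_left_cancel (hpi.2.trans hpj.2.symm))
    rwa [Nat.mod_eq_of_lt (mem_range.1 hi), Nat.mod_eq_of_lt (mem_range.1 hj)] at this
  calc k * count X N = ∑ _j ∈ range k, count X N := by rw [sum_const, card_range, smul_eq_mul]
    _ ≤ ∑ j ∈ range k, count ((· + j • u) ⁻¹' X) (N + R) :=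
        sum_le_sum fun j hj => count_le_count_preimage_add (hu j (mem_range.1 hj)) N
    _ = #((range k).biUnion fun j => {p ∈ box (N + R) | p ∈ (· + j • u) ⁻¹' X}) :=
        (card_biUnion hdisj).symm
    _ ≤ #(box (N + R)) := card_le_card (biUnion_subset.2 fun _ _ => filter_subset _ _)
    _ = (2 * (N + R) + 1) ^ 2 := card_box _

lemma tendsto_sq_div_sq (a : ℝ) :
    Tendsto (fun N : ℕ => ((2 * N + 1 + a) / (2 * N + 1)) ^ 2) atTop (𝓝 1) := by
  have hden : Tendsto (fun N : ℕ => 2 * (N : ℝ) + 1) atTop atTop :=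
    tendsto_atTop_add_const_right _ _
      (tendsto_natCast_atTop_atTop.const_mul_atTop two_pos)
  have := ((tendsto_const_nhds (x := (1 : ℝ))).add
    (tendsto_const_nhds (x := a).div_atTop hden)).pow 2
  rw [add_zero, one_pow] at this
  refine this.congr fun N => ?_
  rw [add_div, div_self (by positivity)]

lemma inv_le_liminf_of_sq_le {c : ℕ → ℕ} {k R : ℕ} (hc : ∀ N, c N ≤ (2 * N + 1) ^ 2)
    (h : ∀ N, (2 * N + 1) ^ 2 ≤ k * c (N + R)) :
    (k : ℝ)⁻¹ ≤ liminf (fun N => (c N : ℝ) / (2 * N + 1) ^ 2) atTop := by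
  have hk : (0 : ℝ) < k := by
    have := h 0
    exact_mod_cast Nat.pos_of_ne_zero fun hk => by simp [hk] at this
  have hlim := (tendsto_sq_div_sq (-2 * R)).div_const k
  rw [one_div] at hlim
  refine hlim.liminf_eq ▸ liminf_le_liminf ?_ hlim.isBoundedUnder_ge
    (isBoundedUnder_of ⟨1, fun N => ?_⟩).isCoboundedUnder_ge
  · filter_upwards [eventually_ge_atTop R] with N hN
    have key : (2 * ((N - R : ℕ) : ℝ) + 1) ^ 2 ≤ k * c N := by
      exact_mod_cast Nat.sub_add_cancel hN ▸ h (N - R)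
    rw [Nat.cast_sub hN] at key
    rw [div_pow, div_div, div_le_div_iff₀ (by positivity) (by positivity)]
    nlinarith [sq_nonneg (2 * (N : ℝ) + 1)]
  · rw [div_le_one (by positivity)]
    exact_mod_cast hc N

lemma liminf_le_inv_of_mul_le {c : ℕ → ℕ} {k R : ℕ} (hk : 0 < k)
    (h : ∀ N, k * c N ≤ (2 * (N + R) + 1) ^ 2) :
    liminf (fun N => (c N : ℝ) / (2 * N + 1) ^ 2) atTop ≤ (k : ℝ)⁻¹ := by
  have hlim := (tendsto_sq_div_sq (2 * R)).div_const k
  rw [one_div] at hlim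
  refine hlim.liminf_eq ▸ liminf_le_liminf (Eventually.of_forall fun N => ?_)
    (isBoundedUnder_of ⟨0, fun N => by positivity⟩) hlim.isCoboundedUnder_ge
  have key : (k : ℝ) * c N ≤ (2 * (N + R) + 1) ^ 2 := by exact_mod_cast h N
  rw [div_pow, div_div, div_le_div_iff₀ (by positivity) (by positivity)]
  nlinarith [sq_nonneg (2 * (N : ℝ) + 1)]

lemma inv_card_le_lowerDensity2 {X : Set (ℤ × ℤ)} {S : Finset (ℤ × ℤ)} (hX : Hits2 X S) :
    (#S : ℝ)⁻¹ ≤ lowerDensity2 X := by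
  obtain ⟨R, hR⟩ := exists_subset_box S
  rw [lowerDensity2_eq_liminf]
  exact inv_le_liminf_of_sq_le (count_le_card_box X) (sq_le_card_mul_count_of_hits hX hR)

lemma lowerDensity2_le_inv {k : ℕ} (hk : 0 < k) {ψ : ℤ × ℤ → ZMod k} {u : ℤ × ℤ}
    (hψ : ∀ p, ψ (p + u) = ψ p + 1) : lowerDensity2 {p | ψ p = 0} ≤ (k : ℝ)⁻¹ := by
  obtain ⟨R, hR⟩ := exists_subset_box ((range k).image (· • u))
  rw [lowerDensity2_eq_liminf]
  exact liminf_le_inv_of_mul_le hk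
    (card_mul_count_le hψ fun j hj => hR (mem_image_of_mem _ (mem_range.2 hj)))

lemma hits_of_apply_add {ψ : ℤ × ℤ → ZMod 3} {a b : ℤ × ℤ} {α β : ZMod 3} (hα : α ≠ 0)
    (hβ : β ≠ 0) (hαβ : α ≠ β) (ha : ∀ p, ψ (p + a) = ψ p + α) (hb : ∀ p, ψ (p + b) = ψ p + β) :
    Hits2 {p | ψ p = 0} {0, a, b} := by
  intro n
  have hcover : ∀ x α β : ZMod 3, α ≠ 0 → β ≠ 0 → α ≠ β → x = 0 ∨ x + α = 0 ∨ x + β = 0 := by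
    decide
  rcases hcover (ψ n) α β hα hβ hαβ with h | h | h
  · exact ⟨0, by simp, by simpa using h⟩
  · exact ⟨a, by simp, by simpa [ha] using h⟩
  · exact ⟨b, by simp, by simpa [hb] using h⟩

lemma apply_add_neg_of_apply_add {R : Type*} [AddGroup R] {ψ : ℤ × ℤ → R} {a : ℤ × ℤ} {α : R}
    (ha : ∀ p, ψ (p + a) = ψ p + α) (p : ℤ × ℤ) : ψ (p + -a) = ψ p + -α := by
  rw [eq_add_neg_iff_add_eq, ← ha, neg_add_cancel_right]

/-- The linear form in the numerator takes the value `D = u.1 * v.2 - u.2 * v.1` at `u` and `-D`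
at `v`. -/
def stripeIndex (u v p : ℤ × ℤ) : ℤ :=
  (p.1 * (u.2 + v.2) - p.2 * (u.1 + v.1)) / (u.1 * v.2 - u.2 * v.1)

section stripes

variable {u v : ℤ × ℤ} (hD : u.1 * v.2 - u.2 * v.1 ≠ 0)
include hD

lemma stripeIndex_add_left (p : ℤ × ℤ) : stripeIndex u v (p + u) = stripeIndex u v p + 1 := by
  rw [stripeIndex, stripeIndex, ← Int.add_mul_ediv_right _ 1 hD]
  congr 1
  simp only [Prod.fst_add, Prod.snd_add]
  ring

lemma stripeIndex_add_right (p : ℤ × ℤ) : stripeIndex u v (p + v) = stripeIndex u v p - 1 := by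
  rw [stripeIndex, stripeIndex, eq_sub_iff_add_eq, ← Int.add_mul_ediv_right _ 1 hD]
  congr 1
  simp only [Prod.fst_add, Prod.snd_add]
  ring

end stripes

lemma det_ne_zero_of_linearIndependent {u v : ℤ × ℤ}
    (hind : ∀ m n : ℤ, m • u + n • v = 0 → m = 0 ∧ n = 0) : u.1 * v.2 - u.2 * v.1 ≠ 0 := by
  intro hD
  have h1 : v.1 • u + (-u.1) • v = 0 := by
    ext <;> simp only [Prod.fst_add, Prod.snd_add, Prod.smul_fst, Prod.smul_snd, smul_eq_mul,
      Prod.fst_zero, Prod.snd_zero] <;> linarith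
  have h2 : v.2 • u + (-u.2) • v = 0 := by
    ext <;> simp only [Prod.fst_add, Prod.snd_add, Prod.smul_fst, Prod.smul_snd, smul_eq_mul,
      Prod.fst_zero, Prod.snd_zero] <;> linarith
  obtain ⟨-, hu1⟩ := hind _ _ h1
  obtain ⟨-, hu2⟩ := hind _ _ h2
  have hu : u = 0 := Prod.ext (neg_eq_zero.1 hu1) (neg_eq_zero.1 hu2)
  simpa using hind 1 0 (by simp [hu])

end Battleship

open Battleship in
theorem stmt15 (u v : ℤ × ℤ) (hind : ∀ m n : ℤ, m • u + n • v = 0 → m = 0 ∧ n = 0) :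
    piercing2 {({0, u, v} : Set (ℤ × ℤ)), ({0, -u, -v} : Set (ℤ × ℤ))} = 1 / 3 := by
  have hD := det_ne_zero_of_linearIndependent hind
  set ψ : ℤ × ℤ → ZMod 3 := fun p => stripeIndex u v p
  have hu (p : ℤ × ℤ) : ψ (p + u) = ψ p + 1 := by simp [ψ, stripeIndex_add_left hD]
  have hv (p : ℤ × ℤ) : ψ (p + v) = ψ p + -1 := by
    simp [ψ, stripeIndex_add_right hD, sub_eq_add_neg]
  set K := {X | ∀ S ∈ ({{0, u, v}, {0, -u, -v}} : Set (Set (ℤ × ℤ))), Hits2 X S}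
  have hX : {p | ψ p = 0} ∈ K := by
    rintro S (rfl | rfl)
    · exact hits_of_apply_add (by decide) (by decide) (by decide) hu hv
    · refine hits_of_apply_add (β := 1) (by decide) (by decide) (by decide)
        (apply_add_neg_of_apply_add hu) fun p => ?_
      rw [apply_add_neg_of_apply_add hv, neg_neg]
  have hlower : ∀ d ∈ lowerDensity2 '' K, 1 / 3 ≤ d := by
    rintro _ ⟨X, hXK, rfl⟩
    refine le_trans ?_ (inv_card_le_lowerDensity2 (S := {0, u, v}) ?_)
    · rw [one_div]
      gcongr
      exact_mod_cast card_le_three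
    · simpa using hXK _ (Or.inl rfl)
  refine le_antisymm ((csInf_le ⟨_, hlower⟩ ⟨_, hX, rfl⟩).trans ?_)
    (le_csInf ⟨_, _, hX, rfl⟩ hlower)
  simpa using lowerDensity2_le_inv three_pos hu
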